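/- Let f : (k+1)^E → ℝ≥0 be k-submodular with k ≥ 2 (not necessarily monotone). Under the same sequence setup as the monotone per-iteration lemma (s^j = s^{j-1} ⊔ I_{[e^j,i^j]}, o^j = (o^{j-1} ⊔ I_{[e^j,i^j]}) ⊔ I_{[e^j,i^j]}, s^{j-1} ⪯ o^{j-1} ⊔ I_{[e^j,i^j]}, s^{j-1} ⪯ o^{j-1}, and i^j maximizing Δ_{e^j,·} f(s^{j-1})), we have f(o^{j-1}) - f(o^j) ≤ 2·[f(s^j) - f(s^{j-1})] for each j ∈ [p]. -/

import Mathlib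

/-!
Let `t = s^{j-1}`, `i` the greedy label at `e = e^j`, and `w` the solution `o^{j-1}` with `e`
unlabelled, so `t ⪯ w`. Then `o^j = w ⊔ I_{[e,i]}`, and `o^{j-1}` is either `w` or
`w ⊔ I_{[e,a]}`. For `a ≠ i`, pairwise monotonicity, orthant submodularity and greedy maximality
give `-Δ_{e,i} f(w) ≤ Δ_{e,a} f(w) ≤ Δ_{e,a} f(t) ≤ Δ_{e,i} f(t)`; in particular (taking
`w = t`, which needs `k ≥ 2`) the greedy gain is nonnegative, and the loss
`f(o^{j-1}) - f(o^j)` is at most twice it in each case.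
-/

open Finset

/-- Join `⊔` on `(k+1)^E`, where a `k`-tuple of pairwise disjoint subsets of `E`
is represented as a function `E → Option (Fin k)`. -/
def ksup {E : Type*} {k : ℕ} (x y : E → Option (Fin k)) : E → Option (Fin k) :=
  fun e => match x e, y e with
  | none, b => b
  | some i, none => some i
  | some i, some j => if i = j then some i else none

/-- Meet `⊓` on `(k+1)^E`. -/
def kinf {E : Type*} {k : ℕ} (x y : E → Option (Fin k)) : E → Option (Fin k) :=
  fun e => match x e, y e with
  | some i, some j => if i = j then some i else none
  | _, _ => none

/-- The partial order `x ⪯ y` : `X_i ⊆ Y_i` for all `i`. -/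
def kle {E : Type*} {k : ℕ} (x y : E → Option (Fin k)) : Prop :=
  ∀ e i, x e = some i → y e = some i

/-- `I_{[e,i]}`: the `k`-tuple with `{e}` in coordinate `i` and `∅` elsewhere. -/
def ksingle {E : Type*} [DecidableEq E] {k : ℕ} (e : E) (i : Fin k) : E → Option (Fin k) :=
  fun e' => if e' = e then some i else none

/-- Marginal gain `Δ_{e,i} f(x) = f(x ⊔ I_{[e,i]}) - f(x)`. -/
def marg {E : Type*} [DecidableEq E] {k : ℕ} (f : (E → Option (Fin k)) → ℝ)
    (x : E → Option (Fin k)) (e : E) (i : Fin k) : ℝ :=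
  f (ksup x (ksingle e i)) - f x

/-- `f` is `k`-submodular: `f(x⊔y) + f(x⊓y) ≤ f(x) + f(y)`. -/
def KSubmodular {E : Type*} {k : ℕ} (f : (E → Option (Fin k)) → ℝ) : Prop :=
  ∀ x y, f (ksup x y) + f (kinf x y) ≤ f x + f y

/-- The support `P(x) = ⋃ᵢ Xᵢ` as a finset. -/
def suppK {E : Type*} [Fintype E] {k : ℕ} (x : E → Option (Fin k)) : Finset E :=
  Finset.univ.filter fun e => x e ≠ none

/-- Orthant submodularity. -/
def OrthantSubmodular {E : Type*} [DecidableEq E] {k : ℕ}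
    (f : (E → Option (Fin k)) → ℝ) : Prop :=
  ∀ x y, kle x y → ∀ e, y e = none → ∀ i, marg f y e i ≤ marg f x e i

/-- Pairwise monotonicity. -/
def PairwiseMonotone {E : Type*} [DecidableEq E] {k : ℕ}
    (f : (E → Option (Fin k)) → ℝ) : Prop :=
  ∀ x e, x e = none → ∀ i j : Fin k, i ≠ j → 0 ≤ marg f x e i + marg f x e j

/-- Monotonicity with respect to `⪯`. -/
def KMonotone {E : Type*} {k : ℕ} (f : (E → Option (Fin k)) → ℝ) : Prop :=
  ∀ x y, kle x y → f x ≤ f y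

section Lattice

variable {E : Type*} [DecidableEq E] {k : ℕ}

lemma ksup_ksingle_apply_of_ne (x : E → Option (Fin k)) {e e' : E} (i : Fin k) (h : e' ≠ e) :
    ksup x (ksingle e i) e' = x e' := by
  simp only [ksup, ksingle, h, if_false]
  cases x e' <;> rfl

lemma ksup_ksingle_of_apply_eq_none {x : E → Option (Fin k)} {e : E} (hx : x e = none)
    (i : Fin k) : ksup x (ksingle e i) = Function.update x e (some i) := by
  funext e'
  by_cases h : e' = e
  · subst h
    simp [ksup, ksingle, hx]
  · rw [ksup_ksingle_apply_of_ne x i h, Function.update_of_ne h]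

lemma ksup_ksup_ksingle (x : E → Option (Fin k)) (e : E) (i : Fin k) :
    ksup (ksup x (ksingle e i)) (ksingle e i) = Function.update x e (some i) := by
  funext e'
  by_cases h : e' = e
  · subst h
    rcases hx : x e' with _ | a
    · simp [ksup, ksingle, hx]
    · by_cases hai : a = i <;> simp [ksup, ksingle, hx, hai]
  · rw [ksup_ksingle_apply_of_ne _ i h, ksup_ksingle_apply_of_ne x i h, Function.update_of_ne h]

lemma kle_update_none {t x : E → Option (Fin k)} {e : E} (htx : kle t x) (ht : t e = none) :
    kle t (Function.update x e none) := by
  intro e' a ha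
  have h : e' ≠ e := by rintro rfl; simp [ht] at ha
  rw [Function.update_of_ne h]
  exact htx e' a ha

end Lattice

section KSubmodular

variable {E : Type*} [DecidableEq E] {k : ℕ} {f : (E → Option (Fin k)) → ℝ}

theorem KSubmodular.pairwiseMonotone (hf : KSubmodular f) : PairwiseMonotone f := by
  intro x e hx i j hij
  have hsup : ksup (Function.update x e (some i)) (Function.update x e (some j)) = x := by
    funext e'
    by_cases h : e' = e
    · subst h
      simp [ksup, hij, hx]
    · simp only [ksup, Function.update_of_ne h]
      cases x e' <;> simp
  have hinf : kinf (Function.update x e (some i)) (Function.update x e (some j)) = x := by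
    funext e'
    by_cases h : e' = e
    · subst h
      simp [kinf, hij, hx]
    · simp only [kinf, Function.update_of_ne h]
      cases x e' <;> simp
  have := hf (Function.update x e (some i)) (Function.update x e (some j))
  rw [hsup, hinf] at this
  simp only [marg, ksup_ksingle_of_apply_eq_none hx]
  linarith

theorem KSubmodular.orthantSubmodular (hf : KSubmodular f) : OrthantSubmodular f := by
  intro x y hxy e hy i
  have hx : x e = none := by
    rcases h : x e with _ | a
    · rfl
    · simpa [hy] using hxy e a h
  have hsup : ksup (Function.update x e (some i)) y = Function.update y e (some i) := by
    funext e'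
    by_cases h : e' = e
    · subst h
      simp [ksup, hy]
    · simp only [ksup, Function.update_of_ne h]
      rcases hxe : x e' with _ | a
      · rfl
      · simp [hxy e' a hxe]
  have hinf : kinf (Function.update x e (some i)) y = x := by
    funext e'
    by_cases h : e' = e
    · subst h
      simp [kinf, hy, hx]
    · simp only [kinf, Function.update_of_ne h]
      rcases hxe : x e' with _ | a
      · rfl
      · simp [hxy e' a hxe]
  have := hf (Function.update x e (some i)) y
  rw [hsup, hinf] at this
  simp only [marg, ksup_ksingle_of_apply_eq_none hx, ksup_ksingle_of_apply_eq_none hy]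
  linarith

variable {t w : E → Option (Fin k)} {e : E} {i : Fin k}

lemma marg_le_marg_of_greedy (hos : OrthantSubmodular f)
    (hgreedy : ∀ a, marg f t e a ≤ marg f t e i) (htw : kle t w) (hw : w e = none) (a : Fin k) :
    marg f w e a ≤ marg f t e i :=
  (hos t w htw e hw a).trans (hgreedy a)

lemma neg_marg_le_marg_of_greedy (hos : OrthantSubmodular f) (hpm : PairwiseMonotone f)
    (hgreedy : ∀ a, marg f t e a ≤ marg f t e i) (htw : kle t w) (hw : w e = none)
    {a : Fin k} (ha : a ≠ i) :
    -marg f w e i ≤ marg f t e i := by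
  linarith [hpm w e hw a i ha, marg_le_marg_of_greedy hos hgreedy htw hw a]

lemma marg_nonneg_of_greedy [Nontrivial (Fin k)] (hos : OrthantSubmodular f)
    (hpm : PairwiseMonotone f) (hgreedy : ∀ a, marg f t e a ≤ marg f t e i) (ht : t e = none) :
    0 ≤ marg f t e i := by
  obtain ⟨a, ha⟩ := exists_ne i
  linarith [neg_marg_le_marg_of_greedy hos hpm hgreedy (fun _ _ h => h) ht ha]

theorem sub_le_two_mul_marg_of_greedy [Nontrivial (Fin k)] (hos : OrthantSubmodular f)
    (hpm : PairwiseMonotone f) (hgreedy : ∀ a, marg f t e a ≤ marg f t e i)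
    (ht : t e = none) {o : E → Option (Fin k)} (hto : kle t o) :
    f o - f (ksup (ksup o (ksingle e i)) (ksingle e i)) ≤ 2 * marg f t e i := by
  set w := Function.update o e none
  have hw : w e = none := Function.update_self ..
  have htw : kle t w := kle_update_none hto ht
  have hoi : Function.update o e (some i) = ksup w (ksingle e i) := by
    rw [ksup_ksingle_of_apply_eq_none hw, Function.update_idem]
  rw [ksup_ksup_ksingle, hoi]
  rcases ho : o e with _ | a
  · have hwo : w = o := Function.update_eq_self_iff.mpr ho.symm
    obtain ⟨a, ha⟩ := exists_ne i
    calc f o - f (ksup w (ksingle e i)) = -marg f w e i := by rw [← hwo, marg]; ring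
      _ ≤ 2 * marg f t e i := by
        linarith [neg_marg_le_marg_of_greedy hos hpm hgreedy htw hw ha,
          marg_nonneg_of_greedy hos hpm hgreedy ht]
  · have hwo : ksup w (ksingle e a) = o := by
      rw [ksup_ksingle_of_apply_eq_none hw, Function.update_idem, ← ho, Function.update_eq_self]
    calc f o - f (ksup w (ksingle e i)) = marg f w e a - marg f w e i := by
          rw [← hwo, marg, marg]; ring
      _ ≤ 2 * marg f t e i := by
        by_cases hai : a = i
        · subst hai
          linarith [marg_nonneg_of_greedy hos hpm hgreedy ht]
        · linarith [marg_le_marg_of_greedy hos hgreedy htw hw a,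
            neg_marg_le_marg_of_greedy hos hpm hgreedy htw hw hai]

end KSubmodular

theorem stmt_13_general {E : Type*} [DecidableEq E] {k p : ℕ} (hk : 2 ≤ k)
    (f : (E → Option (Fin k)) → ℝ) (hf : KSubmodular f)
    (s o : ℕ → (E → Option (Fin k))) (e : ℕ → E) (idx : ℕ → Fin k)
    (hnew : ∀ j, 1 ≤ j → j ≤ p → s (j - 1) (e j) = none)
    (hs : ∀ j, 1 ≤ j → j ≤ p → s j = ksup (s (j - 1)) (ksingle (e j) (idx j)))
    (ho : ∀ j, 1 ≤ j → j ≤ p → o j =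
      ksup (ksup (o (j - 1)) (ksingle (e j) (idx j))) (ksingle (e j) (idx j)))
    (hle2 : ∀ j, 1 ≤ j → j ≤ p → kle (s (j - 1)) (o (j - 1)))
    (hgreedy : ∀ j, 1 ≤ j → j ≤ p →
      ∀ i : Fin k, marg f (s (j - 1)) (e j) i ≤ marg f (s (j - 1)) (e j) (idx j)) :
    ∀ j, 1 ≤ j → j ≤ p → f (o (j - 1)) - f (o j) ≤ 2 * (f (s j) - f (s (j - 1))) := by
  intro j hj1 hjp
  have : Nontrivial (Fin k) := Fin.nontrivial_iff_two_le.mpr hk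
  have hgain : f (s j) - f (s (j - 1)) = marg f (s (j - 1)) (e j) (idx j) := by
    rw [hs j hj1 hjp, marg]
  rw [hgain, ho j hj1 hjp]
  exact sub_le_two_mul_marg_of_greedy hf.orthantSubmodular hf.pairwiseMonotone
    (hgreedy j hj1 hjp) (hnew j hj1 hjp) (hle2 j hj1 hjp)

theorem stmt_13 {E : Type*} [Fintype E] [DecidableEq E] {k p : ℕ} (hk : 2 ≤ k)
    (f : (E → Option (Fin k)) → ℝ) (hf : KSubmodular f) (hnn : ∀ x, 0 ≤ f x)
    (s o : ℕ → (E → Option (Fin k))) (e : ℕ → E) (idx : ℕ → Fin k)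
    (hnew : ∀ j, 1 ≤ j → j ≤ p → s (j - 1) (e j) = none)
    (hs : ∀ j, 1 ≤ j → j ≤ p → s j = ksup (s (j - 1)) (ksingle (e j) (idx j)))
    (ho : ∀ j, 1 ≤ j → j ≤ p → o j =
      ksup (ksup (o (j - 1)) (ksingle (e j) (idx j))) (ksingle (e j) (idx j)))
    (hle1 : ∀ j, 1 ≤ j → j ≤ p →
      kle (s (j - 1)) (ksup (o (j - 1)) (ksingle (e j) (idx j))))
    (hle2 : ∀ j, 1 ≤ j → j ≤ p → kle (s (j - 1)) (o (j - 1)))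
    (hgreedy : ∀ j, 1 ≤ j → j ≤ p →
      ∀ i : Fin k, marg f (s (j - 1)) (e j) i ≤ marg f (s (j - 1)) (e j) (idx j)) :
    ∀ j, 1 ≤ j → j ≤ p → f (o (j - 1)) - f (o j) ≤ 2 * (f (s j) - f (s (j - 1))) :=
  stmt_13_general hk f hf s o e idx hnew hs ho hle2 hgreedy
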